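/- arXiv:2506.18439 — 3 statements merged into one kernel-verified Lean document; each statement's English description precedes it below -/
import Mathlib

section
/- Let ϑ, ϑ̄ : {A,B,Z'} → {0,1} be defined by ϑ(Z')=1, ϑ(A)=1, ϑ(B)=0 and ϑ̄(Z')=1, ϑ̄(A)=0, ϑ̄(B)=1, and define ρ(x₁⋯xₙ) = Σᵢ ϑ(xᵢ)/2ⁱ and ρ̄(x₁⋯xₙ) = Σᵢ ϑ̄(xᵢ)/2ⁱ. Then for any nonempty words u, v over {A,B}, u = v if and only if ρ(u·Z') + ρ̄(v·Z') = 1. -/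
/-- The alphabet {A, B, Z'} (with `Z` playing the role of Z'). -/
inductive Letter : Type
  | A | B | Z
  deriving DecidableEq

/-- The indicator ϑ with ϑ(Z')=1, ϑ(A)=1, ϑ(B)=0. -/
noncomputable def theta : Letter → ℝ
  | .A => 1 | .B => 0 | .Z => 1

/-- The indicator ϑ̄ with ϑ̄(Z')=1, ϑ̄(A)=0, ϑ̄(B)=1. -/
noncomputable def thetaBar : Letter → ℝ
  | .A => 0 | .B => 1 | .Z => 1

/-- ρ(x₁⋯xₙ) = Σᵢ ϑ(xᵢ)/2ⁱ. -/
noncomputable def rho (w : List Letter) : ℝ :=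
  ∑ i : Fin w.length, theta (w.get i) / 2 ^ ((i : ℕ) + 1)

/-- ρ̄(x₁⋯xₙ) = Σᵢ ϑ̄(xᵢ)/2ⁱ. -/
noncomputable def rhoBar (w : List Letter) : ℝ :=
  ∑ i : Fin w.length, thetaBar (w.get i) / 2 ^ ((i : ℕ) + 1)

lemma rho_nil : rho [] = 0 := by simp [rho]

lemma rhoBar_nil : rhoBar [] = 0 := by simp [rhoBar]

lemma rho_cons (x : Letter) (w : List Letter) :
    rho (x :: w) = theta x / 2 + rho w / 2 := by
  show (∑ i : Fin (w.length + 1), theta ((x :: w).get i) / 2 ^ ((i : ℕ) + 1)) = _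
  rw [Fin.sum_univ_succ, rho, Finset.sum_div]
  congr 1
  · norm_num
  apply Finset.sum_congr rfl
  intro i _
  show theta (w.get i) / 2 ^ ((i : ℕ) + 1 + 1) = _
  rw [pow_succ]
  ring

lemma rhoBar_cons (x : Letter) (w : List Letter) :
    rhoBar (x :: w) = thetaBar x / 2 + rhoBar w / 2 := by
  show (∑ i : Fin (w.length + 1), thetaBar ((x :: w).get i) / 2 ^ ((i : ℕ) + 1)) = _
  rw [Fin.sum_univ_succ, rhoBar, Finset.sum_div]
  congr 1
  · norm_num
  apply Finset.sum_congr rfl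
  intro i _
  show thetaBar (w.get i) / 2 ^ ((i : ℕ) + 1 + 1) = _
  rw [pow_succ]
  ring

lemma rho_Z_mem_Ioo (w : List Letter) :
    rho (w ++ [Letter.Z]) ∈ Set.Ioo (0 : ℝ) 1 := by
  induction w with
  | nil =>
      simp only [List.nil_append]
      rw [show ([Letter.Z] : List Letter) = Letter.Z :: [] from rfl, rho_cons, rho_nil]
      norm_num [theta]
  | cons x t ih =>
      rw [List.cons_append, rho_cons]
      obtain ⟨h0, h1⟩ := ih
      have hθ : theta x = 0 ∨ theta x = 1 := by cases x <;> simp [theta]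
      constructor
      · rcases hθ with h | h <;> rw [h] <;> nlinarith
      · rcases hθ with h | h <;> rw [h] <;> nlinarith

lemma rho_Z_injective : ∀ u v : List Letter,
    (∀ x ∈ u, x ≠ Letter.Z) → (∀ x ∈ v, x ≠ Letter.Z) →
    rho (u ++ [Letter.Z]) = rho (v ++ [Letter.Z]) → u = v := by
  intro u
  induction u with
  | nil =>
      intro v _ hv h
      cases v with
      | nil => rfl
      | cons y t =>
          exfalso
          have hZ : rho ([] ++ [Letter.Z]) = 1 / 2 := by
            simp only [List.nil_append]
            rw [show ([Letter.Z] : List Letter) = Letter.Z :: [] from rfl, rho_cons, rho_nil]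
            norm_num [theta]
          rw [List.cons_append, rho_cons, hZ] at h
          obtain ⟨h0, h1⟩ := rho_Z_mem_Ioo t
          have hy : y ≠ Letter.Z := hv y (by simp)
          cases y with
          | A => simp [theta] at h; linarith
          | B => simp [theta] at h; linarith
          | Z => exact hy rfl
  | cons x s ih =>
      intro v hu hv h
      cases v with
      | nil =>
          exfalso
          have hZ : rho ([] ++ [Letter.Z]) = 1 / 2 := by
            simp only [List.nil_append]
            rw [show ([Letter.Z] : List Letter) = Letter.Z :: [] from rfl, rho_cons, rho_nil]
            norm_num [theta]
          rw [List.cons_append, rho_cons, hZ] at h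
          obtain ⟨h0, h1⟩ := rho_Z_mem_Ioo s
          have hx : x ≠ Letter.Z := hu x (by simp)
          cases x with
          | A => simp [theta] at h; linarith
          | B => simp [theta] at h; linarith
          | Z => exact hx rfl
      | cons y t =>
          rw [List.cons_append, List.cons_append, rho_cons, rho_cons] at h
          obtain ⟨hs0, hs1⟩ := rho_Z_mem_Ioo s
          obtain ⟨ht0, ht1⟩ := rho_Z_mem_Ioo t
          have hx : x ≠ Letter.Z := hu x (by simp)
          have hy : y ≠ Letter.Z := hv y (by simp)
          have hxy : x = y := by
            cases x <;> cases y <;>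
              first
                | rfl
                | (exact absurd rfl hx)
                | (exact absurd rfl hy)
                | (exfalso; simp [theta] at h; linarith)
          subst hxy
          have hst : rho (s ++ [Letter.Z]) = rho (t ++ [Letter.Z]) := by linarith
          have : s = t := ih t (fun z hz => hu z (by simp [hz]))
            (fun z hz => hv z (by simp [hz])) hst
          rw [this]

lemma rho_add_rhoBar_Z (v : List Letter) (hv : ∀ x ∈ v, x ≠ Letter.Z) :
    rho (v ++ [Letter.Z]) + rhoBar (v ++ [Letter.Z]) = 1 := by
  induction v with
  | nil =>
      simp only [List.nil_append]
      rw [show ([Letter.Z] : List Letter) = Letter.Z :: [] from rfl, rho_cons, rhoBar_cons,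
        rho_nil, rhoBar_nil]
      norm_num [theta, thetaBar]
  | cons x t ih =>
      have hx : x ≠ Letter.Z := hv x (by simp)
      have hsum : theta x + thetaBar x = 1 := by
        cases x with
        | A => norm_num [theta, thetaBar]
        | B => norm_num [theta, thetaBar]
        | Z => exact absurd rfl hx
      have ih' := ih (fun z hz => hv z (by simp [hz]))
      rw [List.cons_append, rho_cons, rhoBar_cons]
      linarith

/-- For nonempty words `u, v` over {A,B}:  u = v  iff  ρ(u·Z') + ρ̄(v·Z') = 1. -/
theorem rho_add_rhoBar_eq_one_iff (u v : List Letter)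
    (hu : u ≠ []) (hv : v ≠ [])
    (hu' : ∀ x ∈ u, x ≠ Letter.Z) (hv' : ∀ x ∈ v, x ≠ Letter.Z) :
    u = v ↔ rho (u ++ [Letter.Z]) + rhoBar (v ++ [Letter.Z]) = 1 := by
  constructor
  · rintro rfl
    exact rho_add_rhoBar_Z u hu'
  · intro h
    have hv1 := rho_add_rhoBar_Z v hv'
    have heq : rho (u ++ [Letter.Z]) = rho (v ++ [Letter.Z]) := by linarith
    exact rho_Z_injective u v hu' hv' heq
end

section
/- The map w ↦ ρ(w·Z') is injective on words over {A,B}: if ρ(u·Z') = ρ(v·Z') for words u, v over {A,B}, then u = v. -/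
lemma theta_nonneg (x : Letter) : 0 ≤ theta x := by
  cases x <;> simp [theta]

lemma theta_le_one (x : Letter) : theta x ≤ 1 := by
  cases x <;> simp [theta]

lemma rho_nonneg (w : List Letter) : 0 ≤ rho w := by
  induction w with
  | nil => simp [rho_nil]
  | cons x w ih =>
    rw [rho_cons]
    have := theta_nonneg x
    linarith

lemma rho_lt_one (w : List Letter) : rho w < 1 := by
  induction w with
  | nil => simp [rho_nil]
  | cons x w ih =>
    rw [rho_cons]
    have := theta_le_one x
    linarith

lemma rho_pos (w : List Letter) : 0 < rho (w ++ [Letter.Z]) := by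
  induction w with
  | nil => norm_num [rho_cons, rho_nil, theta]
  | cons x w ih =>
    rw [List.cons_append, rho_cons]
    have := theta_nonneg x
    linarith

/-- The map w ↦ ρ(w·Z') is injective on words over {A,B}. -/
theorem rho_injective (u v : List Letter)
    (hu : ∀ x ∈ u, x ≠ Letter.Z) (hv : ∀ x ∈ v, x ≠ Letter.Z)
    (h : rho (u ++ [Letter.Z]) = rho (v ++ [Letter.Z])) :
    u = v := by
  induction u generalizing v with
  | nil =>
    cases v with
    | nil => rfl
    | cons y v =>
      exfalso
      rw [List.nil_append, List.cons_append, rho_cons] at h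
      have h1 := rho_pos v
      have h2 := rho_lt_one (v ++ [Letter.Z])
      have hy : y ≠ Letter.Z := hv y List.mem_cons_self
      cases y with
      | A => rw [rho_cons, rho_nil] at h; simp [theta] at h; linarith
      | B => rw [rho_cons, rho_nil] at h; simp [theta] at h; linarith
      | Z => exact hy rfl
  | cons x u ih =>
    cases v with
    | nil =>
      exfalso
      rw [List.nil_append, List.cons_append, rho_cons] at h
      have h1 := rho_pos u
      have h2 := rho_lt_one (u ++ [Letter.Z])
      have hx : x ≠ Letter.Z := hu x List.mem_cons_self
      cases x with
      | A => rw [rho_cons, rho_nil] at h; simp [theta] at h; linarith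
      | B => rw [rho_cons, rho_nil] at h; simp [theta] at h; linarith
      | Z => exact hx rfl
    | cons y v =>
      rw [List.cons_append, List.cons_append, rho_cons, rho_cons] at h
      have hu' : ∀ a ∈ u, a ≠ Letter.Z := fun a ha => hu a (List.mem_cons_of_mem _ ha)
      have hv' : ∀ a ∈ v, a ≠ Letter.Z := fun a ha => hv a (List.mem_cons_of_mem _ ha)
      have hx : x ≠ Letter.Z := hu x List.mem_cons_self
      have hy : y ≠ Letter.Z := hv y List.mem_cons_self
      have h1 := rho_pos u
      have h2 := rho_lt_one (u ++ [Letter.Z])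
      have h3 := rho_pos v
      have h4 := rho_lt_one (v ++ [Letter.Z])
      have hxy : x = y := by
        cases x <;> cases y <;> simp [theta] at h ⊢ <;>
          first | rfl | (exact absurd rfl hx) | (exact absurd rfl hy) | linarith
      subst hxy
      have : rho (u ++ [Letter.Z]) = rho (v ++ [Letter.Z]) := by linarith
      rw [ih v hu' hv' this]
end

section
/- For a word α of pairs over Σ = {A,B,•} with first-component projection x₁⋯x_l and second-component projection y₁⋯y_l, let P_F(α) and P_S(α) be defined by the recursions P_F(ε)=P_S(ε)=1/2; P_F((•,y)β)=P_F(β), P_F((B,y)β)=(1/2)P_F(β), P_F((A,y)β)=1/2+(1/2)P_F(β); and symmetrically P_S((x,•)β)=P_S(β), P_S((x,A)β)=(1/2)P_S(β), P_S((x,B)β)=1/2+(1/2)P_S(β). Then P_F(α) + P_S(α) = 1 if and only if trim(x₁⋯x_l) = trim(y₁⋯y_l). -/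
/-- The alphabet {A, B, •} (with `dot` playing the role of •). -/
inductive Sig : Type
  | A | B | dot
  deriving DecidableEq

/-- `trim` erases all occurrences of • (yielding a word over {A,B}). -/
def trim : List Sig → List Letter :=
  List.filterMap fun x =>
    match x with
    | .A => some Letter.A
    | .B => some Letter.B
    | .dot => none

/-- ρ̂(w) := ρ(trim(w)·Z'). -/
noncomputable def rhoHat (w : List Sig) : ℝ := rho (trim w ++ [Letter.Z])

/-- ρ̄̂(w) := ρ̄(trim(w)·Z'). -/
noncomputable def rhoBarHat (w : List Sig) : ℝ := rhoBar (trim w ++ [Letter.Z])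

/-- The verification probability P_F, defined recursively on words of pairs over {A,B,•}
    by pattern-matching on the first component:
    P_F(ε)=1/2, P_F((•,y)β)=P_F(β), P_F((B,y)β)=(1/2)P_F(β), P_F((A,y)β)=1/2+(1/2)P_F(β). -/
noncomputable def PF : List (Sig × Sig) → ℝ
  | [] => 1 / 2
  | (Sig.dot, _) :: β => PF β
  | (Sig.B, _) :: β => (1 / 2) * PF β
  | (Sig.A, _) :: β => 1 / 2 + (1 / 2) * PF β

/-- The verification probability P_S, defined symmetrically on the second component:
    P_S(ε)=1/2, P_S((x,•)β)=P_S(β), P_S((x,A)β)=(1/2)P_S(β), P_S((x,B)β)=1/2+(1/2)P_S(β). -/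
noncomputable def PS : List (Sig × Sig) → ℝ
  | [] => 1 / 2
  | (_, Sig.dot) :: β => PS β
  | (_, Sig.A) :: β => (1 / 2) * PS β
  | (_, Sig.B) :: β => 1 / 2 + (1 / 2) * PS β

/-- Auxiliary value function on trimmed words. -/
noncomputable def Faux : List Letter → ℝ
  | [] => 1 / 2
  | .A :: w => 1 / 2 + (1 / 2) * Faux w
  | .B :: w => (1 / 2) * Faux w
  | .Z :: w => 1 / 2 + (1 / 2) * Faux w

lemma Faux_pos : ∀ w : List Letter, 0 < Faux w := by
  intro w
  induction w with
  | nil => norm_num [Faux]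
  | cons a w ih => cases a <;> simp only [Faux] <;> nlinarith

lemma Faux_lt_one : ∀ w : List Letter, Faux w < 1 := by
  intro w
  induction w with
  | nil => norm_num [Faux]
  | cons a w ih => cases a <;> simp only [Faux] <;> nlinarith

lemma Faux_inj : ∀ u v : List Letter, Letter.Z ∉ u → Letter.Z ∉ v →
    Faux u = Faux v → u = v := by
  intro u
  induction u with
  | nil =>
    intro v _ hv h
    cases v with
    | nil => rfl
    | cons b v =>
      exfalso
      have h0 := Faux_pos v
      have h1 := Faux_lt_one v
      cases b <;> simp_all [Faux] <;> nlinarith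
  | cons a u ih =>
    intro v hu hv h
    cases v with
    | nil =>
      exfalso
      have h0 := Faux_pos u
      have h1 := Faux_lt_one u
      cases a <;> simp_all [Faux] <;> nlinarith
    | cons b v =>
      have h0u := Faux_pos u
      have h1u := Faux_lt_one u
      have h0v := Faux_pos v
      have h1v := Faux_lt_one v
      simp only [List.mem_cons, not_or] at hu hv
      cases a <;> cases b <;> simp_all [Faux]
      · exact ih v hv (by linarith)
      · nlinarith
      · nlinarith
      · exact ih v hv (by linarith)

lemma Z_not_mem_trim (w : List Sig) : Letter.Z ∉ trim w := by
  intro h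
  simp only [trim, List.mem_filterMap] at h
  obtain ⟨a, _, ha⟩ := h
  cases a <;> simp_all

lemma PF_eq (α : List (Sig × Sig)) : PF α = Faux (trim (α.map Prod.fst)) := by
  induction α with
  | nil => rfl
  | cons p α ih =>
    obtain ⟨x, y⟩ := p
    cases x <;> simp [PF, trim, List.filterMap_cons, ih, Faux]

lemma PS_eq (α : List (Sig × Sig)) : PS α = 1 - Faux (trim (α.map Prod.snd)) := by
  induction α with
  | nil => norm_num [PS, trim, Faux]
  | cons p α ih =>
    obtain ⟨x, y⟩ := p
    cases y <;> simp [PS, trim, List.filterMap_cons, ih, Faux] <;> ring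

/-- P_F(α) + P_S(α) = 1 iff the trimmed first-component projection equals the trimmed
    second-component projection of α. -/
theorem PF_add_PS_eq_one_iff (α : List (Sig × Sig)) :
    PF α + PS α = 1 ↔ trim (α.map Prod.fst) = trim (α.map Prod.snd) := by
  rw [PF_eq, PS_eq]
  constructor
  · intro h
    exact Faux_inj _ _ (Z_not_mem_trim _) (Z_not_mem_trim _) (by linarith)
  · intro h
    rw [h]; ring
end
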